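/- Let K be a difference subfield of U with σ(K) = K, and let a, b be finite tuples from U with σ(a) ∈ K(a)^alg, σ(b) ∈ K(b)^alg, and b ∈ K(a)^alg (every coordinate of b is algebraic over K(a)). Then dd(b/K) ≤ dd(a/K). -/

import Mathlib

/- Setting: a large algebraically closed field `U` with an automorphism `σ`.
   Tuples are maps `Fin n → U`; for a tuple `t`, the relevant set of coordinates
   is `Set.range t`.  `fAdj E s` is the subfield `E(s)` generated by a subfield
   `E` and a set `s`, and `deg E s` is the degree `μ(s/E) = [E(s):E]`. -/

set_option maxHeartbeats 1000000
set_option synthInstance.maxHeartbeats 1000000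

open Filter Set

variable {U : Type*}

/-- The subfield `E(s)` generated by the subfield `E` and the set `s`. -/
noncomputable def fAdj [Field U] (E : Subfield U) (s : Set U) : Subfield U :=
  (IntermediateField.adjoin E s).toSubfield

/-- The degree `μ(s/E) = [E(s):E]` (as `Module.finrank`; it is `0` when infinite). -/
noncomputable def deg [Field U] (E : Subfield U) (s : Set U) : ℕ :=
  Module.finrank E (IntermediateField.adjoin E s)

/-- `k ↦ μ(σ^{k+1}(s) / K(s, σ(s), …, σ^k(s)))`: the sequence whose eventual
value is the limit degree `ld(s/K)`. -/
noncomputable def ldSeq [Field U] (σ : U ≃+* U) (K : Subfield U) (s : Set U) (k : ℕ) : ℕ :=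
  deg (fAdj K (⋃ i ∈ Set.Iic k, ⇑(σ ^ i) '' s)) (⇑(σ ^ (k + 1)) '' s)

/-- `k ↦ μ(σ^k(s) / K(s))`: the sequence whose `k`-th roots converge to the
distant degree `dd(s/K)`. -/
noncomputable def ddSeq [Field U] (σ : U ≃+* U) (K : Subfield U) (s : Set U) (k : ℕ) : ℕ :=
  deg (fAdj K s) (⇑(σ ^ k) '' s)

/-- The inversive closure `K^inv = ⋃ₙ σ^{-n}(K)`. -/
noncomputable def Kinv [Field U] (σ : U ≃+* U) (K : Subfield U) : Subfield U :=
  ⨆ n : ℕ, K.map (σ⁻¹ ^ n : U ≃+* U).toRingHom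

/-- The difference field `K(s)_σ = K(σ^i(s) : i ∈ ℕ)` generated by `s` over `K`. -/
noncomputable def diffAdj [Field U] (σ : U ≃+* U) (K : Subfield U) (s : Set U) : Subfield U :=
  fAdj K (⋃ i : ℕ, ⇑(σ ^ i) '' s)

/-
Write `τ = σ ^ k`. Enlarging the base field from `K(b)` to `K(b)(a)` lowers the degree of any
finite algebraic set by at most a factor `C` that depends only on `K(b)` and `a`: adjoining an
element `y` algebraic over the base costs at most `[F(y) : F]`, while adjoining a transcendental
`y` costs nothing, because an `F`-basis of a finite extension `F(T)` stays linearly independent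
over `F(y)` (clear denominators and compare coefficients of polynomials in `y`). Over `K(a)(b)`
the tower law bounds the degree of `τ b` by `μ(τ a / K(a)) · μ(τ b / K(τ a))`, and as `σ(K) = K`
the last factor is `μ(b / K(a))`, transported along `τ`. Hence
`μ(τ b / K(b)) ≤ C · μ(b / K(a)) · μ(τ a / K(a))` for every `k`, and the constant disappears
under `k`-th roots.
-/open scoped Polynomial
open IntermediateField

theorem Transcendental.eq_zero_of_sum_aeval_mul_eq_zero {F E : Type*} [Field F] [Field E]
    [Algebra F E] {X : IntermediateField F E} {y : E} (hy : Transcendental X y) {ι : Type*}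
    {v : ι → X} (hv : LinearIndependent F v) {s : Finset ι} {p : ι → F[X]}
    (hp : ∑ i ∈ s, Polynomial.aeval y (p i) * v i = 0) : ∀ i ∈ s, p i = 0 := by
  set P : X[X] := ∑ i ∈ s, (p i).map (algebraMap F X) * Polynomial.C (v i)
  have hP : P = 0 := by
    refine transcendental_iff.1 hy P ?_
    simpa [P, map_sum, Polynomial.aeval_map_algebraMap] using hp
  intro i hi
  ext j
  have hj : ∑ i ∈ s, (p i).coeff j • v i = 0 := by
    simpa [P, Polynomial.finsetSum_coeff, Polynomial.coeff_mul_C, Algebra.smul_def] using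
      congr(($hP).coeff j)
  simpa using linearIndependent_iff'.1 hv s _ hj i hi

theorem Transcendental.linearIndependent_adjoin_simple {F E : Type*} [Field F] [Field E]
    [Algebra F E] {X : IntermediateField F E} {y : E} (hy : Transcendental X y) {ι : Type*}
    {v : ι → X} (hv : LinearIndependent F v) : LinearIndependent F⟮y⟯ (fun i => (v i : E)) := by
  -- `F⟮y⟯` is the fraction field of `F[y]`, whose elements are the `p(y)` with `p : F[X]`.
  open scoped algebraAdjoinAdjoin in
  rw [← LinearIndependent.iff_fractionRing (Algebra.adjoin F {y}) F⟮y⟯, linearIndependent_iff']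
  intro s g hg i hi
  have hrange : ∀ i, ∃ q : F[X], Polynomial.aeval y q = g i := fun i => by
    simpa [Algebra.adjoin_singleton_eq_range_aeval] using (g i).2
  choose p hp using hrange
  have := hy.eq_zero_of_sum_aeval_mul_eq_zero hv (s := s) (p := p)
    (by simpa [← hp, Algebra.smul_def] using hg)
  exact Subtype.ext (by simp [← hp, this i hi])

theorem le_of_tendsto_rpow_one_div_of_le_mul {x y : ℕ → ℕ} {C : ℕ} (hC : 0 < C)
    (hxy : ∀ k, x k ≤ C * y k) {a b : ℝ}
    (hx : Tendsto (fun k => (x k : ℝ) ^ (1 / (k : ℝ))) atTop (nhds a))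
    (hy : Tendsto (fun k => (y k : ℝ) ^ (1 / (k : ℝ))) atTop (nhds b)) : a ≤ b := by
  have hC1 : Tendsto (fun k : ℕ => (C : ℝ) ^ (1 / (k : ℝ))) atTop (nhds 1) := by
    simpa [Function.comp_def] using (Real.continuousAt_const_rpow (by positivity)).tendsto.comp
      tendsto_one_div_atTop_nhds_zero_nat
  have hCy := hC1.mul hy
  rw [one_mul] at hCy
  refine le_of_tendsto_of_tendsto' hx hCy fun k => ?_
  rw [← Real.mul_rpow (by positivity) (by positivity)]
  exact Real.rpow_le_rpow (by positivity) (by exact_mod_cast hxy k) (by positivity)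

section Subfield

variable [Field U]

theorem IsAlgebraic.tower_top_of_subfield_le {E F : Subfield U} (h : E ≤ F) {x : U}
    (hx : IsAlgebraic E x) : IsAlgebraic F x := by
  let : Algebra E F := (Subfield.inclusion h).toAlgebra
  have : IsScalarTower E F U := .of_algebraMap_eq fun _ => rfl
  exact hx.extendScalars (Subfield.inclusion h).injective

theorem fAdj_eq_closure (E : Subfield U) (s : Set U) :
    fAdj E s = Subfield.closure (E ∪ s) := by
  change Subfield.closure (range (algebraMap E U) ∪ s) = _
  rw [show range (algebraMap E U) = E from Subtype.range_coe]

theorem le_fAdj (E : Subfield U) (s : Set U) : E ≤ fAdj E s := by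
  rw [fAdj_eq_closure]
  exact fun x hx => Subfield.subset_closure (Or.inl hx)

theorem subset_fAdj (E : Subfield U) (s : Set U) : s ⊆ fAdj E s := by
  rw [fAdj_eq_closure]
  exact fun x hx => Subfield.subset_closure (Or.inr hx)

theorem fAdj_le {E F : Subfield U} {s : Set U} (hE : E ≤ F) (hs : s ⊆ F) : fAdj E s ≤ F := by
  rw [fAdj_eq_closure]
  exact Subfield.closure_le.2 (union_subset hE hs)

theorem fAdj_mono_left {E F : Subfield U} (h : E ≤ F) (s : Set U) : fAdj E s ≤ fAdj F s :=
  fAdj_le (h.trans (le_fAdj F s)) (subset_fAdj F s)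

theorem fAdj_empty (E : Subfield U) : fAdj E ∅ = E :=
  le_antisymm (fAdj_le le_rfl (empty_subset _)) (le_fAdj E ∅)

theorem fAdj_fAdj (E : Subfield U) (s t : Set U) : fAdj (fAdj E s) t = fAdj E (s ∪ t) := by
  simp only [fAdj_eq_closure, Subfield.closure_union, Subfield.closure_eq, sup_assoc]

theorem map_fAdj (f : U →+* U) (E : Subfield U) (s : Set U) :
    (fAdj E s).map f = fAdj (E.map f) (f '' s) := by
  rw [fAdj_eq_closure, fAdj_eq_closure, RingHom.map_field_closure, image_union, Subfield.coe_map]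

theorem deg_eq_relfinrank (E : Subfield U) (s : Set U) :
    deg E s = E.relfinrank (fAdj E s) := by
  rw [Subfield.relfinrank_eq_finrank_of_le (le_fAdj E s)]
  rfl

theorem deg_union (E : Subfield U) (s t : Set U) :
    deg E (s ∪ t) = deg E s * deg (fAdj E s) t := by
  rw [deg_eq_relfinrank, deg_eq_relfinrank, deg_eq_relfinrank, ← fAdj_fAdj]
  exact (Subfield.relfinrank_mul_relfinrank (le_fAdj E s) (le_fAdj _ t)).symm

theorem deg_map (f : U →+* U) (E : Subfield U) (s : Set U) :
    deg (E.map f) (f '' s) = deg E s := by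
  rw [deg_eq_relfinrank, deg_eq_relfinrank, ← map_fAdj]
  exact Subfield.relfinrank_map_map E (fAdj E s) f

theorem deg_pos_iff {E : Subfield U} {s : Set U} (hs : s.Finite) :
    0 < deg E s ↔ ∀ x ∈ s, IsAlgebraic E x := by
  refine ⟨fun h x hx => ?_, fun h => ?_⟩
  · have : FiniteDimensional E (adjoin E s) := Module.finite_of_finrank_pos h
    exact isAlgebraic_iff.1
      (Algebra.IsAlgebraic.isAlgebraic (⟨x, subset_adjoin E s hx⟩ : adjoin E s))
  · have := hs.to_subtype
    have := finiteDimensional_adjoin fun x hx => (h x hx).isIntegral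
    exact Module.finrank_pos

theorem deg_le_deg_of_subset {E : Subfield U} {s t : Set U} (hst : s ⊆ t) (ht : 0 < deg E t) :
    deg E s ≤ deg E t := by
  have : FiniteDimensional E (adjoin E t) := Module.finite_of_finrank_pos ht
  exact finrank_le_of_le_right (adjoin.mono E s t hst)

theorem rank_adjoin_le_of_le {E F : Subfield U} (h : E ≤ F) (s : Set U)
    [FiniteDimensional E (adjoin E s)] :
    Module.rank F (adjoin F s) ≤ Module.rank E (adjoin E s) := by
  let : Algebra E F := (Subfield.inclusion h).toAlgebra
  have : IsScalarTower E F U := .of_algebraMap_eq fun _ => rfl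
  have hsF : adjoin F (adjoin E s : Set U) = adjoin F s := by
    refine le_antisymm ?_ (adjoin.mono _ _ _ (subset_adjoin E s))
    rw [adjoin_le_iff]
    exact (adjoin_le_iff.2 (subset_adjoin F s) : adjoin E s ≤ (adjoin F s).restrictScalars E)
  rw [← hsF]
  exact adjoin_rank_le_of_isAlgebraic_right F (adjoin E s)

theorem deg_pos_of_le {E F : Subfield U} (h : E ≤ F) {s : Set U} (hs : 0 < deg E s) :
    0 < deg F s := by
  have : FiniteDimensional E (adjoin E s) := Module.finite_of_finrank_pos hs
  have : FiniteDimensional F (adjoin F s) := Module.rank_lt_aleph0_iff.1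
    ((rank_adjoin_le_of_le h s).trans_lt (Module.rank_lt_aleph0 E _))
  exact Module.finrank_pos

theorem deg_le_deg_of_le {E F : Subfield U} (h : E ≤ F) {s : Set U} (hs : 0 < deg E s) :
    deg F s ≤ deg E s := by
  have : FiniteDimensional E (adjoin E s) := Module.finite_of_finrank_pos hs
  exact Cardinal.toNat_le_toNat (rank_adjoin_le_of_le h s) (Module.rank_lt_aleph0 E _)

theorem IsAlgebraic.subfield_map {E : Subfield U} {x : U} (hx : IsAlgebraic E x) (f : U →+* U) :
    IsAlgebraic (E.map f) (f x) := by
  have hfx := (deg_pos_iff (finite_singleton x)).2 (by simpa using hx)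
  rw [← deg_map f, image_singleton, deg_pos_iff (finite_singleton _)] at hfx
  simpa using hfx

theorem isAlgebraic_of_isAlgebraic_fAdj {E : Subfield U} {s : Set U} (hs : 0 < deg E s) {x : U}
    (hx : IsAlgebraic (fAdj E s) x) : IsAlgebraic E x := by
  have : FiniteDimensional E (adjoin E s) := Module.finite_of_finrank_pos hs
  have hx' : IsIntegral (adjoin E s) x := hx.isIntegral
  exact (isIntegral_trans x hx').isAlgebraic

theorem deg_le_deg_fAdj_of_transcendental {F : Subfield U} {T : Set U} (hT : 0 < deg F T) {y : U}
    (hy : Transcendental F y) : deg F T ≤ deg (fAdj F {y}) T := by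
  have : FiniteDimensional F (adjoin F T) := Module.finite_of_finrank_pos hT
  have : FiniteDimensional (fAdj F {y}) (adjoin (fAdj F {y}) T) :=
    Module.finite_of_finrank_pos (deg_pos_of_le (le_fAdj F {y}) hT)
  have hyT : Transcendental (adjoin F T) y := fun h => hy (isAlgebraic_of_isAlgebraic_fAdj hT h)
  let v := Module.finBasis F (adjoin F T)
  have hv : LinearIndependent (fAdj F {y}) (fun i => (v i : U)) :=
    hyT.linearIndependent_adjoin_simple v.linearIndependent
  have hvT : LinearIndependent (fAdj F {y})
      (fun i => (⟨v i, fAdj_mono_left (le_fAdj F {y}) T (v i).2⟩ : adjoin (fAdj F {y}) T)) :=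
    .of_comp (adjoin (fAdj F {y}) T).val.toLinearMap hv
  simpa [deg] using hvT.fintype_card_le_finrank

theorem exists_deg_le_mul_deg_fAdj {c : Set U} (hc : c.Finite) (F : Subfield U) :
    ∃ C : ℕ, 0 < C ∧ ∀ T : Set U, deg F T ≤ C * deg (fAdj F c) T := by
  induction c, hc using Set.Finite.induction_on generalizing F with
  | empty => exact ⟨1, one_pos, fun T => by rw [fAdj_empty, one_mul]⟩
  | @insert y c _ _ ih =>
    obtain ⟨C, hC, hCT⟩ := ih (fAdj F {y})
    rw [insert_eq, ← fAdj_fAdj]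
    by_cases hy : IsAlgebraic F y
    · have hFy : 0 < deg F {y} := (deg_pos_iff (finite_singleton y)).2 (by simpa using hy)
      refine ⟨deg F {y} * C, Nat.mul_pos hFy hC, fun T => ?_⟩
      rcases (deg F T).eq_zero_or_pos with hT | hT
      · simp [hT]
      have hFTy : 0 < deg (fAdj F T) {y} := (deg_pos_iff (finite_singleton y)).2
        (by simpa using hy.tower_top_of_subfield_le (le_fAdj F T))
      calc deg F T ≤ deg F T * deg (fAdj F T) {y} := Nat.le_mul_of_pos_right _ hFTy
        _ = deg F {y} * deg (fAdj F {y}) T := by rw [← deg_union, ← deg_union, union_comm]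
        _ ≤ deg F {y} * C * deg (fAdj (fAdj F {y}) c) T := by
          rw [mul_assoc]; exact Nat.mul_le_mul_left _ (hCT T)
    · refine ⟨C, hC, fun T => ?_⟩
      rcases (deg F T).eq_zero_or_pos with hT | hT
      · simp [hT]
      exact (deg_le_deg_fAdj_of_transcendental hT hy).trans (hCT T)

theorem Subfield.map_pow_eq_self {σ : U ≃+* U} {K : Subfield U} (hK : K.map σ.toRingHom = K)
    (k : ℕ) : K.map ((σ ^ k : U ≃+* U) : U →+* U) = K := by
  induction k with
  | zero => ext x; simp
  | succ k ih =>
    rw [pow_succ, show ((σ ^ k * σ : U ≃+* U) : U →+* U) = ((σ ^ k : U ≃+* U) : U →+* U).comp σ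
      from rfl, ← Subfield.map_map]
    exact (congrArg _ hK).trans ih

theorem isAlgebraic_pow_apply {σ : U ≃+* U} {K : Subfield U} (hK : K.map σ.toRingHom = K)
    {s : Set U} (hs : s.Finite) (hσ : ∀ x ∈ s, IsAlgebraic (fAdj K s) (σ x)) (k : ℕ) :
    ∀ x ∈ s, IsAlgebraic (fAdj K s) ((σ ^ k) x) := by
  induction k with
  | zero => exact fun x hx => isAlgebraic_algebraMap (⟨x, subset_fAdj K s hx⟩ : fAdj K s)
  | succ k ih =>
    intro x hx
    rw [pow_succ, RingAut.mul_apply]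
    have hmap : (fAdj K s).map ((σ ^ k : U ≃+* U) : U →+* U) = fAdj K ((σ ^ k) '' s) := by
      rw [map_fAdj, Subfield.map_pow_eq_self hK]
      rfl
    have hx' := (hσ x hx).subfield_map ((σ ^ k : U ≃+* U) : U →+* U)
    rw [hmap] at hx'
    refine isAlgebraic_of_isAlgebraic_fAdj (s := (σ ^ k) '' s) ?_
      (hx'.tower_top_of_subfield_le (fAdj_mono_left (le_fAdj K s) _))
    exact (deg_pos_iff (hs.image _)).2 (forall_mem_image.2 ih)

theorem exists_ddSeq_le_mul_ddSeq {σ : U ≃+* U} {K : Subfield U} (hK : K.map σ.toRingHom = K)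
    {s t : Set U} (hs : s.Finite) (ht : t.Finite) (hσ : ∀ x ∈ s, IsAlgebraic (fAdj K s) (σ x))
    (hts : ∀ x ∈ t, IsAlgebraic (fAdj K s) x) :
    ∃ C : ℕ, 0 < C ∧ ∀ k, ddSeq σ K t k ≤ C * ddSeq σ K s k := by
  set A := fAdj K s
  obtain ⟨C, hC, hCT⟩ := exists_deg_le_mul_deg_fAdj hs (fAdj K t)
  have hd : 0 < deg A t := (deg_pos_iff ht).2 hts
  refine ⟨C * deg A t, Nat.mul_pos hC hd, fun k => ?_⟩
  set τ : U →+* U := ((σ ^ k : U ≃+* U) : U →+* U)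
  have hτt : deg (fAdj K (τ '' s)) (τ '' t) = deg A t := by
    rw [← deg_map τ A t, map_fAdj, Subfield.map_pow_eq_self hK]
  have hAτs : 0 < deg A (τ '' s) :=
    (deg_pos_iff (hs.image τ)).2 (forall_mem_image.2 (isAlgebraic_pow_apply hK hs hσ k))
  have hKA : fAdj K (τ '' s) ≤ fAdj A (τ '' s) := fAdj_mono_left (le_fAdj K s) _
  have hτd : 0 < deg (fAdj K (τ '' s)) (τ '' t) := hτt ▸ hd
  have hunion : 0 < deg A (τ '' s ∪ τ '' t) := by
    rw [deg_union]
    exact Nat.mul_pos hAτs (deg_pos_of_le hKA hτd)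
  have hAB : A ≤ fAdj (fAdj K t) s := fAdj_mono_left (le_fAdj K t) s
  calc ddSeq σ K t k = deg (fAdj K t) (τ '' t) := rfl
    _ ≤ C * deg (fAdj (fAdj K t) s) (τ '' t) := hCT _
    _ ≤ C * deg (fAdj (fAdj K t) s) (τ '' s ∪ τ '' t) := by
      gcongr; exact deg_le_deg_of_subset subset_union_right (deg_pos_of_le hAB hunion)
    _ ≤ C * deg A (τ '' s ∪ τ '' t) := by gcongr; exact deg_le_deg_of_le hAB hunion
    _ = C * (deg A (τ '' s) * deg (fAdj A (τ '' s)) (τ '' t)) := by rw [deg_union]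
    _ ≤ C * (deg A (τ '' s) * deg (fAdj K (τ '' s)) (τ '' t)) := by
      gcongr; exact deg_le_deg_of_le hKA hτd
    _ = C * deg A t * ddSeq σ K s k := by
      rw [hτt]; change _ = C * deg A t * deg A (τ '' s); ring

end Subfield

theorem stmt17_general [Field U] (σ : U ≃+* U) (K : Subfield U)
    (hK : K.map σ.toRingHom = K) {n m : ℕ} (a : Fin n → U) (b : Fin m → U)
    (ha : ∀ i, IsAlgebraic (fAdj K (Set.range a)) (σ (a i)))
    (hba : ∀ j, IsAlgebraic (fAdj K (Set.range a)) (b j))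
    (Da Db : ℝ)
    (hDa : Tendsto (fun k => (ddSeq σ K (Set.range a) k : ℝ) ^ (1 / (k : ℝ)))
      atTop (nhds Da))
    (hDb : Tendsto (fun k => (ddSeq σ K (Set.range b) k : ℝ) ^ (1 / (k : ℝ)))
      atTop (nhds Db)) :
    Db ≤ Da := by
  obtain ⟨C, hC, hCk⟩ := exists_ddSeq_le_mul_ddSeq hK (finite_range a) (finite_range b)
    (forall_mem_range.2 ha) (forall_mem_range.2 hba)
  exact le_of_tendsto_rpow_one_div_of_le_mul hC hCk hDb hDa

/-- if `b ∈ K(a)^alg` then `dd(b/K) ≤ dd(a/K)`. -/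
theorem stmt17 [Field U] [IsAlgClosed U] (σ : U ≃+* U) (K : Subfield U)
    (hK : K.map σ.toRingHom = K) {n m : ℕ} (a : Fin n → U) (b : Fin m → U)
    (ha : ∀ i, IsAlgebraic (fAdj K (Set.range a)) (σ (a i)))
    (hb : ∀ j, IsAlgebraic (fAdj K (Set.range b)) (σ (b j)))
    (hba : ∀ j, IsAlgebraic (fAdj K (Set.range a)) (b j))
    (Da Db : ℝ)
    (hDa : Tendsto (fun k => (ddSeq σ K (Set.range a) k : ℝ) ^ (1 / (k : ℝ)))
      atTop (nhds Da))
    (hDb : Tendsto (fun k => (ddSeq σ K (Set.range b) k : ℝ) ^ (1 / (k : ℝ)))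
      atTop (nhds Db)) :
    Db ≤ Da :=
  stmt17_general σ K hK a b ha hba Da Db hDa hDb
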